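/- In the compact setting described in the context, the set Φ_K of roots of 𝔨 with respect to 𝔱_K equals the set of restrictions to 𝔱_K of the roots in Φ₁ ∪ Φ₃; that is, Φ_K = {θ|_{𝔱_K} : θ ∈ Φ₁ ∪ Φ₃}. -/

import Mathlib

open scoped TensorProduct

/-- The root space `𝔤_θ ⊆ 𝔤_ℂ = ℂ ⊗[ℝ] L` of an ℝ-linear map `θ : 𝔱 → ℂ`:
`{Z | [H, Z] = θ(H)·Z for all H ∈ 𝔱}`. -/
def rootSet {L : Type*} [LieRing L] [LieAlgebra ℝ L]
    (t : Submodule ℝ L) (θ : t →ₗ[ℝ] ℂ) : Set (ℂ ⊗[ℝ] L) :=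
  {Z | ∀ H : t, ⁅(1 : ℂ) ⊗ₜ[ℝ] (H : L), Z⁆ = θ H • Z}

/-- `θ ∈ Φ`: `θ` is a root, i.e. `θ ≠ 0` and `𝔤_θ ≠ 0`. -/
def IsRoot {L : Type*} [LieRing L] [LieAlgebra ℝ L]
    (t : Submodule ℝ L) (θ : t →ₗ[ℝ] ℂ) : Prop :=
  θ ≠ 0 ∧ ∃ Z ∈ rootSet t θ, Z ≠ 0

/-- `θ ∈ Φ₁`: `θ` is a root with `𝔤_θ ⊆ 𝔨_ℂ`. -/
def IsRoot1 {L : Type*} [LieRing L] [LieAlgebra ℝ L]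
    (t k : Submodule ℝ L) (θ : t →ₗ[ℝ] ℂ) : Prop :=
  IsRoot t θ ∧ rootSet t θ ⊆ (k.baseChange ℂ : Set (ℂ ⊗[ℝ] L))

/-- `θ ∈ Φ₂`: `θ` is a root with `𝔤_θ ⊆ 𝔭_ℂ`. -/
def IsRoot2 {L : Type*} [LieRing L] [LieAlgebra ℝ L]
    (t p : Submodule ℝ L) (θ : t →ₗ[ℝ] ℂ) : Prop :=
  IsRoot t θ ∧ rootSet t θ ⊆ (p.baseChange ℂ : Set (ℂ ⊗[ℝ] L))

/-- `θ ∈ Φ₃ = Φ \ (Φ₁ ∪ Φ₂)`. -/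
def IsRoot3 {L : Type*} [LieRing L] [LieAlgebra ℝ L]
    (t k p : Submodule ℝ L) (θ : t →ₗ[ℝ] ℂ) : Prop :=
  IsRoot t θ ∧ ¬IsRoot1 t k θ ∧ ¬IsRoot2 t p θ

/-- The root space `𝔨_ϱ ⊆ 𝔨_ℂ` of an ℝ-linear map `ϱ : 𝔱_K → ℂ`:
`{Z ∈ 𝔨_ℂ | [H, Z] = ϱ(H)·Z for all H ∈ 𝔱_K}`. -/
def kRootSet {L : Type*} [LieRing L] [LieAlgebra ℝ L]
    (k tK : Submodule ℝ L) (ϱ : tK →ₗ[ℝ] ℂ) : Set (ℂ ⊗[ℝ] L) :=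
  {Z | Z ∈ k.baseChange ℂ ∧ ∀ H : tK, ⁅(1 : ℂ) ⊗ₜ[ℝ] (H : L), Z⁆ = ϱ H • Z}

/-- `ϱ ∈ Φ_K`: `ϱ` is a `K`-root, i.e. `ϱ ≠ 0` and `𝔨_ϱ ≠ 0`. -/
def IsKRoot {L : Type*} [LieRing L] [LieAlgebra ℝ L]
    (k tK : Submodule ℝ L) (ϱ : tK →ₗ[ℝ] ℂ) : Prop :=
  ϱ ≠ 0 ∧ ∃ Z ∈ kRootSet k tK ϱ, Z ≠ 0

/-!
If `θ ∈ Φ₁ ∪ Φ₃`, some `Z ∈ 𝔤_θ` lies outside `𝔭_ℂ`, so `Z + σZ` is a nonzero vector of `𝔨_ℂ` of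
`𝔱_K`-weight `θ|𝔱_K`. This weight is nonzero: otherwise `Z + σZ` centralizes `𝔱_K`, hence lies in
`(𝔱_K)_ℂ ⊆ 𝔱_ℂ` by maximality of `𝔱_K` and commutes with `𝔱`; as `θ ∘ σ = -θ` on `𝔱`, this forces
`σZ = Z` and then `θ = -θ` on `Z`.

Conversely, the Killing form being definite, every `ad H` is semisimple, so the commuting family
`ad 𝔱` diagonalizes the `ϱ`-weight space `W` of `𝔱_K` in `𝔤_ℂ`. The `𝔱`-weight of a weight vector in
`W` is a root restricting to `ϱ`; if none of these roots is in `Φ₁ ∪ Φ₃`, they are all in `Φ₂`, so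
`W ⊆ 𝔭_ℂ`, which contradicts `0 ≠ Z ∈ W ∩ 𝔨_ℂ` for a `K`-root vector `Z` of weight `ϱ`.
-/

namespace Module.End

theorem isSemisimple_of_skewAdjoint_of_anisotropic {K M : Type*} [Field K] [AddCommGroup M]
    [Module K M] [FiniteDimensional K M] (B : LinearMap.BilinForm K M) (hB : B.IsRefl)
    (hanis : ∀ x, B x x = 0 → x = 0) (f : Module.End K M) (hf : ∀ x y, B (f x) y = -B x (f y)) :
    f.IsSemisimple := by
  refine isSemisimple_iff.mpr fun q hq ↦ ⟨B.orthogonal q, fun y hy n hn ↦ ?_,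
    B.isCompl_orthogonal_of_restrict_nondegenerate hB
      (B.nondegenerate_restrict_of_disjoint_orthogonal hB ?_)⟩
  · have hfny : B (f n) y = 0 := hy _ (hq hn)
    rwa [hf, neg_eq_zero] at hfny
  · exact Submodule.disjoint_def.mpr fun x hx hx' ↦ hanis x (hx' x hx)

theorem IsSemisimple.baseChange {K F M : Type*} [Field K] [PerfectField K] [Field F] [Algebra K F]
    [AddCommGroup M] [Module K M] [FiniteDimensional K M] {f : Module.End K M}
    (hf : f.IsSemisimple) : IsSemisimple (f.baseChange F) := by
  refine isSemisimple_of_squarefree_aeval_eq_zero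
    ((PerfectField.separable_iff_squarefree.mpr hf.minpoly_squarefree).map
      (f := algebraMap K F)).squarefree ?_
  rw [Polynomial.aeval_map_algebraMap, show f.baseChange F = baseChangeHom K F M f from rfl,
    Polynomial.aeval_algHom_apply, minpoly.aeval, map_zero]

theorem iSup_iInf_eigenspace_eq_top_of_commute {ι K M : Type*} [Field K] [IsAlgClosed K]
    [AddCommGroup M] [Module K M] [FiniteDimensional K M] (f : ι → Module.End K M)
    (hcomm : Pairwise fun i j ↦ Commute (f i) (f j)) (hss : ∀ i, (f i).IsSemisimple) :
    ⨆ χ : ι → K, ⨅ i, (f i).eigenspace (χ i) = ⊤ := by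
  rw [← iSup_iInf_maxGenEigenspace_eq_top_of_iSup_maxGenEigenspace_eq_top_of_commute f hcomm
    fun i ↦ iSup_maxGenEigenspace_eq_top (f i)]
  simp_rw [fun i ↦ (hss i).isFinitelySemisimple.maxGenEigenspace_eq_eigenspace]

theorem le_of_forall_eigenvector_mem {ι K M : Type*} [Field K] [IsAlgClosed K]
    [AddCommGroup M] [Module K M] [FiniteDimensional K M] (f : ι → Module.End K M)
    (hcomm : Pairwise fun i j ↦ Commute (f i) (f j)) (hss : ∀ i, (f i).IsSemisimple)
    {W q : Submodule K M} (hW : ∀ i, W ∈ (f i).invtSubmodule)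
    (h : ∀ χ : ι → K, ∀ v ∈ W, (∀ i, f i v = χ i • v) → v ∈ q) : W ≤ q := by
  let g : ι → Module.End K W := fun i ↦ (f i).restrict (hW i)
  have htop := iSup_iInf_eigenspace_eq_top_of_commute g
    (fun i j hij ↦ LinearMap.restrict_commute (hcomm hij) _ _) fun i ↦ (hss i).restrict (hW i)
  have hle : ⨆ χ : ι → K, ⨅ i, (g i).eigenspace (χ i) ≤ q.comap W.subtype :=
    iSup_le fun χ w hw ↦ h χ w w.2 fun i ↦
      congrArg Subtype.val (mem_eigenspace_iff.mp ((Submodule.mem_iInf _).mp hw i))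
  intro v hv
  exact (htop ▸ hle) (Submodule.mem_top (x := (⟨v, hv⟩ : W)))

end Module.End

theorem LieAlgebra.ad_isSemisimple_of_killingForm_anisotropic {K L : Type*} [Field K] [LieRing L]
    [LieAlgebra K L] [FiniteDimensional K L] (h : ∀ x : L, killingForm K L x x = 0 → x = 0)
    (x : L) : (LieAlgebra.ad K L x).IsSemisimple :=
  Module.End.isSemisimple_of_skewAdjoint_of_anisotropic (killingForm K L)
    (fun a b hab ↦ LieModule.traceForm_comm K L L a b ▸ hab) h _
    (LieModule.traceForm_apply_lie_apply' K L L x)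

theorem LinearMap.exists_eq_of_forall_apply_eq_smul {R K V M : Type*} [CommSemiring R] [Field K]
    [Algebra R K] [AddCommMonoid V] [Module R V] [AddCommGroup M] [Module K M] [Module R M]
    [IsScalarTower R K M] (φ : V →ₗ[R] M) {v : M} (hv : v ≠ 0) (χ : V → K)
    (h : ∀ x, φ x = χ x • v) : ∃ θ : V →ₗ[R] K, ⇑θ = χ :=
  have hinj := smul_left_injective K hv
  ⟨{ toFun := χ
     map_add' := fun x y ↦ hinj (by simp only [← h, map_add, add_smul])
     map_smul' := fun r x ↦ hinj (by simp only [← h, map_smul, RingHom.id_apply, smul_assoc]) },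
    rfl⟩

theorem LinearMap.baseChange_mem_baseChange {R A M N : Type*} [CommSemiring R] [Semiring A]
    [Algebra R A] [AddCommMonoid M] [Module R M] [AddCommMonoid N] [Module R N]
    (f : M →ₗ[R] N) {q : Submodule R N} (hf : ∀ x, f x ∈ q) (Z : A ⊗[R] M) :
    f.baseChange A Z ∈ q.baseChange A :=
  ⟨(f.codRestrict q hf).baseChange A Z, by
    rw [← LinearMap.comp_apply, ← LinearMap.baseChange_comp, LinearMap.subtype_comp_codRestrict]⟩

theorem LinearMap.baseChange_eq_zero_of_mem_baseChange {R A M N : Type*} [CommSemiring R]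
    [Semiring A] [Algebra R A] [AddCommMonoid M] [Module R M] [AddCommMonoid N] [Module R N]
    (f : M →ₗ[R] N) {q : Submodule R M} (hf : ∀ x ∈ q, f x = 0) {Z : A ⊗[R] M}
    (hZ : Z ∈ q.baseChange A) : f.baseChange A Z = 0 := by
  obtain ⟨W, rfl⟩ := hZ
  rw [← LinearMap.comp_apply, ← LinearMap.baseChange_comp,
    show f ∘ₗ q.subtype = 0 from LinearMap.ext fun x ↦ hf x x.2, LinearMap.baseChange_zero,
    LinearMap.zero_apply]

namespace ComplexTensor

variable {M N : Type*} [AddCommGroup M] [Module ℝ M] [AddCommGroup N] [Module ℝ N]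

noncomputable def re : ℂ ⊗[ℝ] M →ₗ[ℝ] M :=
  TensorProduct.lift ((LinearMap.lsmul ℝ M).comp Complex.reLm)

noncomputable def im : ℂ ⊗[ℝ] M →ₗ[ℝ] M :=
  TensorProduct.lift ((LinearMap.lsmul ℝ M).comp Complex.imLm)

@[simp] theorem re_tmul (c : ℂ) (x : M) : re (c ⊗ₜ[ℝ] x) = c.re • x := rfl

@[simp] theorem im_tmul (c : ℂ) (x : M) : im (c ⊗ₜ[ℝ] x) = c.im • x := rfl

theorem one_tmul_re_add_I_tmul_im (Z : ℂ ⊗[ℝ] M) :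
    (1 : ℂ) ⊗ₜ[ℝ] re Z + Complex.I ⊗ₜ[ℝ] im Z = Z := by
  induction Z using TensorProduct.induction_on with
  | zero => simp
  | tmul c x =>
    rw [re_tmul, im_tmul, TensorProduct.tmul_smul, TensorProduct.tmul_smul,
      TensorProduct.smul_tmul', TensorProduct.smul_tmul', ← TensorProduct.add_tmul]
    congr 1
    apply Complex.ext <;> simp
  | add u v hu hv =>
    simp only [map_add, TensorProduct.tmul_add]
    rw [add_add_add_comm, hu, hv]

theorem re_baseChange (f : M →ₗ[ℝ] N) (Z : ℂ ⊗[ℝ] M) : re (f.baseChange ℂ Z) = f (re Z) := by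
  induction Z using TensorProduct.induction_on with
  | zero => simp
  | tmul c x => simp
  | add u v hu hv => simp only [map_add, hu, hv]

theorem im_baseChange (f : M →ₗ[ℝ] N) (Z : ℂ ⊗[ℝ] M) : im (f.baseChange ℂ Z) = f (im Z) := by
  induction Z using TensorProduct.induction_on with
  | zero => simp
  | tmul c x => simp
  | add u v hu hv => simp only [map_add, hu, hv]

theorem mem_baseChange_iff {q : Submodule ℝ M} {Z : ℂ ⊗[ℝ] M} :
    Z ∈ q.baseChange ℂ ↔ re Z ∈ q ∧ im Z ∈ q := by
  constructor
  · rintro ⟨W, rfl⟩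
    rw [re_baseChange, im_baseChange]
    exact ⟨(re W).2, (im W).2⟩
  · rintro ⟨hre, him⟩
    rw [← one_tmul_re_add_I_tmul_im Z]
    exact add_mem (q.tmul_mem_baseChange_of_mem _ hre) (q.tmul_mem_baseChange_of_mem _ him)

theorem disjoint_baseChange {p q : Submodule ℝ M} (h : Disjoint p q) :
    Disjoint (p.baseChange ℂ) (q.baseChange ℂ) := by
  refine Submodule.disjoint_def.mpr fun Z hp hq ↦ ?_
  rw [mem_baseChange_iff] at hp hq
  rw [← one_tmul_re_add_I_tmul_im Z, Submodule.disjoint_def.mp h _ hp.1 hq.1,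
    Submodule.disjoint_def.mp h _ hp.2 hq.2]
  simp

end ComplexTensor

section Involution

variable {R A M : Type*} [CommRing R] [CommRing A] [Algebra R A] [AddCommGroup M] [Module R M]
  {σ : M →ₗ[R] M}

theorem add_baseChange_mem_baseChange (hσ : ∀ x, σ (σ x) = x) {k : Submodule R M}
    (hk : ∀ x, σ x = x → x ∈ k) (Z : A ⊗[R] M) : Z + σ.baseChange A Z ∈ k.baseChange A := by
  have hmem := (LinearMap.id + σ).baseChange_mem_baseChange
    (fun x ↦ hk _ (by simp [hσ, add_comm])) (A := A) Z
  simpa [LinearMap.baseChange_add, LinearMap.baseChange_id] using hmem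

theorem sub_baseChange_mem_baseChange (hσ : ∀ x, σ (σ x) = x) {p : Submodule R M}
    (hp : ∀ x, σ x = -x → x ∈ p) (Z : A ⊗[R] M) : Z - σ.baseChange A Z ∈ p.baseChange A := by
  have hmem := (LinearMap.id - σ).baseChange_mem_baseChange
    (fun x ↦ hp _ (by simp [hσ])) (A := A) Z
  simpa [LinearMap.baseChange_sub, LinearMap.baseChange_id] using hmem

end Involution

theorem add_baseChange_ne_zero_of_notMem {R A M : Type*} [CommRing R] [Field A] [CharZero A]
    [Algebra R A] [AddCommGroup M] [Module R M] {σ : M →ₗ[R] M} (hσ : ∀ x, σ (σ x) = x)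
    {p : Submodule R M} (hp : ∀ x, σ x = -x → x ∈ p) {Z : A ⊗[R] M}
    (hZ : Z ∉ p.baseChange A) : Z + σ.baseChange A Z ≠ 0 := by
  intro h
  have hsub := sub_baseChange_mem_baseChange hσ hp Z
  rw [eq_neg_of_add_eq_zero_right h, sub_neg_eq_add, ← two_smul A,
    Submodule.smul_mem_iff _ two_ne_zero] at hsub
  exact hZ hsub

def LieHom.baseChange {R L L' : Type*} (A : Type*) [CommRing R] [CommRing A] [Algebra R A]
    [LieRing L] [LieAlgebra R L] [LieRing L'] [LieAlgebra R L'] (f : L →ₗ⁅R⁆ L') :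
    A ⊗[R] L →ₗ⁅A⁆ A ⊗[R] L' :=
  { (f : L →ₗ[R] L').baseChange A with
    map_lie' := (LieAlgebra.ExtendScalars.map (AlgHom.id R A) f).map_lie _ _ }

section LieBaseChange

variable {R A L : Type*} [CommRing R] [CommRing A] [Algebra R A] [LieRing L] [LieAlgebra R L]

theorem LieAlgebra.lie_one_tmul_eq_baseChange (x : L) (Z : A ⊗[R] L) :
    ⁅(1 : A) ⊗ₜ[R] x, Z⁆ = (ad R L x).baseChange A Z :=
  LinearMap.congr_fun (LieModule.toEnd_baseChange R A L L x) Z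

@[simp] theorem LieHom.baseChange_tmul {L' : Type*} [LieRing L'] [LieAlgebra R L']
    (f : L →ₗ⁅R⁆ L') (a : A) (x : L) : f.baseChange A (a ⊗ₜ[R] x) = a ⊗ₜ[R] f x :=
  rfl

theorem LieHom.lie_one_tmul_baseChange {σ : L →ₗ⁅R⁆ L} (hσ : ∀ x, σ (σ x) = x) (x : L)
    (Z : A ⊗[R] L) :
    ⁅(1 : A) ⊗ₜ[R] x, σ.baseChange A Z⁆ = σ.baseChange A ⁅(1 : A) ⊗ₜ[R] σ x, Z⁆ := by
  rw [LieHom.map_lie, LieHom.baseChange_tmul, hσ]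

theorem LieAlgebra.commute_ad_one_tmul {x y : L} (h : ⁅x, y⁆ = 0) :
    Commute (ad A (A ⊗[R] L) ((1 : A) ⊗ₜ[R] x)) (ad A (A ⊗[R] L) ((1 : A) ⊗ₜ[R] y)) :=
  LinearMap.ext fun Z ↦ by
    simp only [Module.End.mul_apply, ad_apply]
    rw [leibniz_lie, ExtendScalars.bracket_tmul, h, TensorProduct.tmul_zero, zero_lie, zero_add]

theorem LieAlgebra.lie_one_tmul_eq_zero_of_mem_baseChange {s : Submodule R L}
    (hs : ∀ x ∈ s, ∀ y ∈ s, ⁅x, y⁆ = 0) {x : L} (hx : x ∈ s) {Y : A ⊗[R] L}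
    (hY : Y ∈ s.baseChange A) : ⁅(1 : A) ⊗ₜ[R] x, Y⁆ = 0 := by
  rw [lie_one_tmul_eq_baseChange]
  exact LinearMap.baseChange_eq_zero_of_mem_baseChange _ (hs x hx) hY

theorem mem_of_forall_lie_eq_zero_of_maximal {k a : Submodule R L}
    (ha : ∀ x ∈ a, ∀ y ∈ a, ⁅x, y⁆ = 0) (hak : a ≤ k)
    (hmax : ∀ s : Submodule R L, s ≤ k → (∀ x ∈ s, ∀ y ∈ s, ⁅x, y⁆ = 0) → a ≤ s → s = a)
    {x : L} (hxk : x ∈ k) (hx : ∀ h ∈ a, ⁅h, x⁆ = 0) : x ∈ a := by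
  have habel : ∀ u ∈ a ⊔ R ∙ x, ∀ v ∈ a ⊔ R ∙ x, ⁅u, v⁆ = 0 := by
    intro u hu v hv
    obtain ⟨h, hh, _, hr, rfl⟩ := Submodule.mem_sup.mp hu
    obtain ⟨h', hh', _, hr', rfl⟩ := Submodule.mem_sup.mp hv
    obtain ⟨r, rfl⟩ := Submodule.mem_span_singleton.mp hr
    obtain ⟨r', rfl⟩ := Submodule.mem_span_singleton.mp hr'
    simp [ha h hh h' hh', hx h hh, ← lie_skew x h', hx h' hh']
  rw [← hmax _ (sup_le hak ((Submodule.span_singleton_le_iff_mem _ _).mpr hxk)) habel le_sup_left]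
  exact Submodule.mem_sup_right (Submodule.mem_span_singleton_self x)

end LieBaseChange

section Complexification

variable {L : Type*} [LieRing L] [LieAlgebra ℝ L]

theorem LieAlgebra.ad_one_tmul_isSemisimple [FiniteDimensional ℝ L]
    (h : ∀ x : L, killingForm ℝ L x x = 0 → x = 0) (x : L) :
    (ad ℂ (ℂ ⊗[ℝ] L) (1 ⊗ₜ x)).IsSemisimple := by
  rw [show ad ℂ (ℂ ⊗[ℝ] L) (1 ⊗ₜ x) = (ad ℝ L x).baseChange ℂ from
    LieModule.toEnd_baseChange ℝ ℂ L L x]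
  exact (ad_isSemisimple_of_killingForm_anisotropic h x).baseChange

theorem mem_baseChange_of_forall_lie_eq_zero_of_maximal {k a : Submodule ℝ L}
    (ha : ∀ x ∈ a, ∀ y ∈ a, ⁅x, y⁆ = 0) (hak : a ≤ k)
    (hmax : ∀ s : Submodule ℝ L, s ≤ k → (∀ x ∈ s, ∀ y ∈ s, ⁅x, y⁆ = 0) → a ≤ s → s = a)
    {Y : ℂ ⊗[ℝ] L} (hYk : Y ∈ k.baseChange ℂ) (hY : ∀ h ∈ a, ⁅(1 : ℂ) ⊗ₜ[ℝ] h, Y⁆ = 0) :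
    Y ∈ a.baseChange ℂ := by
  rw [ComplexTensor.mem_baseChange_iff] at hYk ⊢
  refine ⟨mem_of_forall_lie_eq_zero_of_maximal ha hak hmax hYk.1 fun h hh ↦ ?_,
    mem_of_forall_lie_eq_zero_of_maximal ha hak hmax hYk.2 fun h hh ↦ ?_⟩
  · rw [← LieAlgebra.ad_apply ℝ, ← ComplexTensor.re_baseChange,
      ← LieAlgebra.lie_one_tmul_eq_baseChange, hY h hh, map_zero]
  · rw [← LieAlgebra.ad_apply ℝ, ← ComplexTensor.im_baseChange,
      ← LieAlgebra.lie_one_tmul_eq_baseChange, hY h hh, map_zero]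

theorem exists_linearMap_of_forall_lie_one_tmul_eq_smul {t : Submodule ℝ L} {v : ℂ ⊗[ℝ] L}
    (hv : v ≠ 0) {χ : t → ℂ} (h : ∀ x : t, ⁅(1 : ℂ) ⊗ₜ[ℝ] (x : L), v⁆ = χ x • v) :
    ∃ θ : t →ₗ[ℝ] ℂ, ⇑θ = χ :=
  LinearMap.exists_eq_of_forall_apply_eq_smul (V := t)
    { toFun := fun x ↦ ⁅(1 : ℂ) ⊗ₜ[ℝ] (x : L), v⁆
      map_add' := fun x y ↦ by
        rw [Submodule.coe_add, TensorProduct.tmul_add, add_lie (L := ℂ ⊗[ℝ] L)]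
      map_smul' := fun r x ↦ by
        rw [Submodule.coe_smul, TensorProduct.tmul_smul, RingHom.id_apply,
          ← algebraMap_smul ℂ r, smul_lie (L := ℂ ⊗[ℝ] L), algebraMap_smul] }
    hv χ h

variable {t k p tK : Submodule ℝ L}

theorem isRoot1_or_isRoot3_iff (hkp : Disjoint (k.baseChange ℂ) (p.baseChange ℂ))
    {θ : t →ₗ[ℝ] ℂ} :
    IsRoot1 t k θ ∨ IsRoot3 t k p θ ↔ θ ≠ 0 ∧ ∃ Z ∈ rootSet t θ, Z ∉ p.baseChange ℂ := by
  constructor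
  · rintro (⟨⟨hθ, Z, hZ, hZ0⟩, hsub⟩ | ⟨hroot, -, hnot2⟩)
    · exact ⟨hθ, Z, hZ, fun hZp ↦ hZ0 (Submodule.disjoint_def.mp hkp Z (hsub hZ) hZp)⟩
    · obtain ⟨Z, hZ, hZp⟩ := Set.not_subset.mp fun hsub ↦ hnot2 ⟨hroot, hsub⟩
      exact ⟨hroot.1, Z, hZ, hZp⟩
  · rintro ⟨hθ, Z, hZ, hZp⟩
    have hroot : IsRoot t θ := ⟨hθ, Z, hZ, fun h ↦ hZp (h ▸ Submodule.zero_mem _)⟩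
    by_cases hsub : rootSet t θ ⊆ k.baseChange ℂ
    · exact Or.inl ⟨hroot, hsub⟩
    · exact Or.inr ⟨hroot, fun h ↦ hsub h.2, fun h ↦ hZp (h.2 hZ)⟩

theorem exists_eq_comp_inclusion_of_isKRoot [FiniteDimensional ℝ L]
    (hkill : ∀ x : L, killingForm ℝ L x x = 0 → x = 0) (htab : ∀ x ∈ t, ∀ y ∈ t, ⁅x, y⁆ = 0)
    (htKle : tK ≤ t) (hkp : Disjoint (k.baseChange ℂ) (p.baseChange ℂ)) {ϱ : tK →ₗ[ℝ] ℂ}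
    (hϱ : IsKRoot k tK ϱ) :
    ∃ θ : t →ₗ[ℝ] ℂ, (θ ≠ 0 ∧ ∃ Z ∈ rootSet t θ, Z ∉ p.baseChange ℂ) ∧
      ϱ = θ.comp (Submodule.inclusion htKle) := by
  obtain ⟨hϱ0, Z, ⟨hZk, hZ⟩, hZ0⟩ := hϱ
  by_contra hcon
  let adt : t → Module.End ℂ (ℂ ⊗[ℝ] L) := fun x ↦ LieAlgebra.ad ℂ _ ((1 : ℂ) ⊗ₜ[ℝ] (x : L))
  let W : Submodule ℂ (ℂ ⊗[ℝ] L) := ⨅ H : tK, (adt (Submodule.inclusion htKle H)).eigenspace (ϱ H)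
  have mem_W (v) : v ∈ W ↔ ∀ H : tK, ⁅(1 : ℂ) ⊗ₜ[ℝ] (H : L), v⁆ = ϱ H • v := by
    simp [W, adt, Submodule.mem_iInf]
  have hWp : W ≤ p.baseChange ℂ := by
    refine Module.End.le_of_forall_eigenvector_mem adt
      (fun x y _ ↦ LieAlgebra.commute_ad_one_tmul (htab x x.2 y y.2))
      (fun x ↦ LieAlgebra.ad_one_tmul_isSemisimple hkill x) (fun x v hv ↦ ?_)
      fun χ v hv hχ ↦ ?_
    · refine (mem_W _).mpr fun H ↦ ?_
      have hcomm := LinearMap.congr_fun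
        (LieAlgebra.commute_ad_one_tmul (R := ℝ) (A := ℂ) (htab H (htKle H.2) x x.2)).eq v
      simp only [Module.End.mul_apply, LieAlgebra.ad_apply] at hcomm
      simp only [adt, LieAlgebra.ad_apply, hcomm, (mem_W v).mp hv H, lie_smul]
    · by_contra hvp
      have hv0 : v ≠ 0 := fun h ↦ hvp (h ▸ Submodule.zero_mem _)
      obtain ⟨θ, rfl⟩ := exists_linearMap_of_forall_lie_one_tmul_eq_smul hv0 hχ
      have hres : θ.comp (Submodule.inclusion htKle) = ϱ :=
        LinearMap.ext fun H ↦ smul_left_injective ℂ hv0 ((hχ _).symm.trans ((mem_W v).mp hv H))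
      exact hcon ⟨θ, ⟨fun h ↦ hϱ0 (by rw [← hres, h, LinearMap.zero_comp]), v, hχ, hvp⟩,
        hres.symm⟩
  exact hZ0 (Submodule.disjoint_def.mp hkp Z hZk (hWp ((mem_W Z).mpr hZ)))

theorem lie_one_tmul_baseChange_eq_smul {σ : L →ₗ⁅ℝ⁆ L} (hσ : ∀ x, σ (σ x) = x)
    {θ : t →ₗ[ℝ] ℂ} {Z : ℂ ⊗[ℝ] L} (hZ : Z ∈ rootSet t θ) {x y : t} (hxy : σ x = y) :
    ⁅(1 : ℂ) ⊗ₜ[ℝ] (x : L), σ.baseChange ℂ Z⁆ = θ y • σ.baseChange ℂ Z := by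
  rw [LieHom.lie_one_tmul_baseChange hσ, hxy, hZ y, map_smul]

theorem add_baseChange_mem_kRootSet {σ : L →ₗ⁅ℝ⁆ L} (hσ : ∀ x, σ (σ x) = x)
    (hk : ∀ x, x ∈ k ↔ σ x = x) (htK : tK = t ⊓ k) (htKle : tK ≤ t) {θ : t →ₗ[ℝ] ℂ}
    {Z : ℂ ⊗[ℝ] L} (hZ : Z ∈ rootSet t θ) :
    Z + σ.baseChange ℂ Z ∈ kRootSet k tK (θ.comp (Submodule.inclusion htKle)) := by
  refine ⟨add_baseChange_mem_baseChange hσ (fun x ↦ (hk x).mpr) Z, fun H ↦ ?_⟩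
  have hσH : σ H = H := (hk _).mp (htK.le H.2).2
  change ⁅(1 : ℂ) ⊗ₜ[ℝ] (Submodule.inclusion htKle H : L), _⁆ = _
  rw [lie_add (L := ℂ ⊗[ℝ] L), LinearMap.comp_apply, smul_add, hZ,
    lie_one_tmul_baseChange_eq_smul hσ hZ (y := Submodule.inclusion htKle H) hσH]

theorem comp_inclusion_ne_zero {σ : L →ₗ⁅ℝ⁆ L} (hσ : ∀ x, σ (σ x) = x)
    (hk : ∀ x, x ∈ k ↔ σ x = x) (htab : ∀ x ∈ t, ∀ y ∈ t, ⁅x, y⁆ = 0)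
    (hσt : ∀ x ∈ t, σ x ∈ t) (htK : tK = t ⊓ k) (htKle : tK ≤ t)
    (htKmax : ∀ s : Submodule ℝ L, s ≤ k → (∀ x ∈ s, ∀ y ∈ s, ⁅x, y⁆ = 0) → tK ≤ s → s = tK)
    {θ : t →ₗ[ℝ] ℂ} (hθ : θ ≠ 0) {Z : ℂ ⊗[ℝ] L} (hZ : Z ∈ rootSet t θ) (hZ0 : Z ≠ 0) :
    θ.comp (Submodule.inclusion htKle) ≠ 0 := by
  intro h0
  obtain ⟨hZk, hweight⟩ := add_baseChange_mem_kRootSet hσ hk htK htKle hZ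
  have hcent : Z + σ.baseChange ℂ Z ∈ tK.baseChange ℂ :=
    mem_baseChange_of_forall_lie_eq_zero_of_maximal
      (fun x hx y hy ↦ htab x (htKle hx) y (htKle hy)) (htK ▸ inf_le_right) htKmax hZk
      fun h hh ↦ by rw [hweight ⟨h, hh⟩, h0, LinearMap.zero_apply, zero_smul]
  obtain ⟨x, hx⟩ : ∃ x, θ x ≠ 0 := by
    by_contra! h
    exact hθ (LinearMap.ext h)
  let y : t := ⟨σ x, hσt x x.2⟩
  have hθy : θ y = -θ x := by
    have hmem : (x : L) + σ x ∈ tK :=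
      htK ▸ ⟨add_mem x.2 y.2, (hk _).mpr (by rw [map_add, hσ, add_comm])⟩
    have hsum := LinearMap.congr_fun h0 ⟨_, hmem⟩
    rw [LinearMap.comp_apply, LinearMap.zero_apply,
      show Submodule.inclusion htKle ⟨_, hmem⟩ = x + y from rfl, map_add] at hsum
    exact eq_neg_of_add_eq_zero_right hsum
  have hσZ := lie_one_tmul_baseChange_eq_smul hσ hZ (x := x) (y := y) rfl
  have hsym : θ x • (Z - σ.baseChange ℂ Z) = 0 := by
    have hcomm := LieAlgebra.lie_one_tmul_eq_zero_of_mem_baseChange htab x.2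
      (Submodule.baseChange_mono ℂ htKle hcent)
    rwa [lie_add (L := ℂ ⊗[ℝ] L), hZ, hσZ, hθy, neg_smul, ← sub_eq_add_neg, ← smul_sub] at hcomm
  have hfix : σ.baseChange ℂ Z = Z := (sub_eq_zero.mp ((smul_eq_zero.mp hsym).resolve_left hx)).symm
  rw [hfix, hZ, hθy, neg_smul] at hσZ
  have := IsAddTorsionFree.of_isTorsionFree ℂ (ℂ ⊗[ℝ] L)
  exact hZ0 ((smul_eq_zero.mp (self_eq_neg.mp hσZ)).resolve_left hx)

theorem isKRoot_comp_inclusion {σ : L →ₗ⁅ℝ⁆ L} (hσ : ∀ x, σ (σ x) = x)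
    (hk : ∀ x, x ∈ k ↔ σ x = x) (hp : ∀ x, σ x = -x → x ∈ p)
    (htab : ∀ x ∈ t, ∀ y ∈ t, ⁅x, y⁆ = 0) (hσt : ∀ x ∈ t, σ x ∈ t) (htK : tK = t ⊓ k)
    (htKle : tK ≤ t)
    (htKmax : ∀ s : Submodule ℝ L, s ≤ k → (∀ x ∈ s, ∀ y ∈ s, ⁅x, y⁆ = 0) → tK ≤ s → s = tK)
    {θ : t →ₗ[ℝ] ℂ} (hθ : θ ≠ 0) {Z : ℂ ⊗[ℝ] L} (hZ : Z ∈ rootSet t θ)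
    (hZp : Z ∉ p.baseChange ℂ) : IsKRoot k tK (θ.comp (Submodule.inclusion htKle)) :=
  ⟨comp_inclusion_ne_zero hσ hk htab hσt htK htKle htKmax hθ hZ
      fun h ↦ hZp (h ▸ Submodule.zero_mem _),
    Z + σ.baseChange ℂ Z, add_baseChange_mem_kRootSet hσ hk htK htKle hZ,
    add_baseChange_ne_zero_of_notMem hσ hp hZp⟩

end Complexification

theorem stmt_15_general (L : Type*) [LieRing L] [LieAlgebra ℝ L] [Module.Finite ℝ L]
    (hkill : ∀ x : L, x ≠ 0 → killingForm ℝ L x x < 0)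
    (σ : L →ₗ⁅ℝ⁆ L) (hσinv : ∀ x, σ (σ x) = x)
    (k p : Submodule ℝ L)
    (hk : ∀ x, x ∈ k ↔ σ x = x) (hp : ∀ x, x ∈ p ↔ σ x = -x)
    (t : Submodule ℝ L)
    (htab : ∀ x ∈ t, ∀ y ∈ t, ⁅x, y⁆ = 0)
    (hσt : ∀ x ∈ t, σ x ∈ t)
    (tK : Submodule ℝ L) (htK : tK = t ⊓ k)
    (htKle : tK ≤ t)
    (htKmax : ∀ s : Submodule ℝ L, s ≤ k → (∀ x ∈ s, ∀ y ∈ s, ⁅x, y⁆ = 0) → tK ≤ s → s = tK) :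
    {ϱ : tK →ₗ[ℝ] ℂ | IsKRoot k tK ϱ} =
      {ϱ : tK →ₗ[ℝ] ℂ | ∃ θ : t →ₗ[ℝ] ℂ,
        (IsRoot1 t k θ ∨ IsRoot3 t k p θ) ∧ ϱ = θ.comp (Submodule.inclusion htKle)} := by
  have hkp : Disjoint (k.baseChange ℂ) (p.baseChange ℂ) := by
    refine ComplexTensor.disjoint_baseChange (Submodule.disjoint_def.mpr fun x hxk hxp ↦ ?_)
    have := IsAddTorsionFree.of_isTorsionFree ℝ L
    exact self_eq_neg.mp (((hk x).mp hxk).symm.trans ((hp x).mp hxp))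
  have hanis (x : L) (hx : killingForm ℝ L x x = 0) : x = 0 := by
    by_contra h
    exact (hkill x h).ne hx
  ext ϱ
  constructor
  · intro hϱ
    obtain ⟨θ, hθ, rfl⟩ := exists_eq_comp_inclusion_of_isKRoot hanis htab htKle hkp hϱ
    exact ⟨θ, (isRoot1_or_isRoot3_iff hkp).mpr hθ, rfl⟩
  · rintro ⟨θ, hθ, rfl⟩
    obtain ⟨hθ0, Z, hZ, hZp⟩ := (isRoot1_or_isRoot3_iff hkp).mp hθ
    exact isKRoot_comp_inclusion hσinv hk (fun x ↦ (hp x).mpr) htab hσt htK htKle htKmax hθ0 hZ hZp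

/-- In the compact setting (`𝔤` a finite-dimensional real Lie algebra with
negative definite Killing form, `σ` an involutive automorphism with fixed subalgebra `𝔨` and
`(−1)`-eigenspace `𝔭`, `𝔱` a `σ`-stable maximal abelian subalgebra with `𝔱_K = 𝔱 ∩ 𝔨` maximal
abelian in `𝔨` and `𝔱₀ = 𝔱 ∩ 𝔭`), the set `Φ_K` of roots of `𝔨` with respect to `𝔱_K` equals
the set of restrictions to `𝔱_K` of the roots in `Φ₁ ∪ Φ₃`. -/
theorem stmt_15 (L : Type*) [LieRing L] [LieAlgebra ℝ L] [Module.Finite ℝ L]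
    (hkill : ∀ x : L, x ≠ 0 → killingForm ℝ L x x < 0)
    (σ : L →ₗ⁅ℝ⁆ L) (hσinv : ∀ x, σ (σ x) = x)
    (k p : Submodule ℝ L)
    (hk : ∀ x, x ∈ k ↔ σ x = x) (hp : ∀ x, x ∈ p ↔ σ x = -x)
    (t : Submodule ℝ L)
    (htab : ∀ x ∈ t, ∀ y ∈ t, ⁅x, y⁆ = 0)
    (htmax : ∀ s : Submodule ℝ L, (∀ x ∈ s, ∀ y ∈ s, ⁅x, y⁆ = 0) → t ≤ s → s = t)
    (hσt : ∀ x ∈ t, σ x ∈ t)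
    (tK t0 : Submodule ℝ L) (htK : tK = t ⊓ k) (ht0 : t0 = t ⊓ p)
    (htKle : tK ≤ t)
    (htKmax : ∀ s : Submodule ℝ L, s ≤ k → (∀ x ∈ s, ∀ y ∈ s, ⁅x, y⁆ = 0) → tK ≤ s → s = tK) :
    {ϱ : tK →ₗ[ℝ] ℂ | IsKRoot k tK ϱ} =
      {ϱ : tK →ₗ[ℝ] ℂ | ∃ θ : t →ₗ[ℝ] ℂ,
        (IsRoot1 t k θ ∨ IsRoot3 t k p θ) ∧ ϱ = θ.comp (Submodule.inclusion htKle)} :=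
  stmt_15_general L hkill σ hσinv k p hk hp t htab hσt tK htK htKle htKmax
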